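/- Let F(z) = Σ_{k≥0} a_k z^k, and let (p_k)_{k≥0} be a probability distribution on the nonnegative integers with p_0 > 0, p_k > 0 whenever a_k ≠ 0, and Σ_{k≥1} k p_k ≤ 1. Set b_k = a_k/p_k if p_k ≠ 0 and b_k = 0 otherwise, assume b* = sup_{k≥1} |b_k| < ∞, and set w(x,t) = v(x,t)/p_0. Let T > 0 satisfy T ≤ √(2/b*) and sup_{x∈ℝ} |w(x,t)| + (t²/2)|b_0| ≤ 1 for all t ∈ [0,T). If u and ũ are two mild solutions of □u = F(u) on [0,T) with |u(x,t)| ≤ 1 and |ũ(x,t)| ≤ 1 for all (x,t) ∈ ℝ × [0,T), then u = ũ on ℝ × [0,T). -/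

import Mathlib

/-!
On `[-1, 1]` the nonlinearity is Lipschitz with constant `L = ∑ k |a_k|`, which is finite
because `k |a_k| = k |b_k| p_k ≤ b* k p_k`. Subtracting the Duhamel formulas of two solutions and
bounding the light cone by the rectangle `[x - t, x + t] × [0, t]`, induction on `n` gives
`|u - ũ| (x, t) ≤ 2 (L t²)ⁿ / n!` for every `n`, and the right-hand side tends to `0`.
-/

open MeasureTheory Set

/-- The backward light cone (a triangle) of the space-time point `(x,t)`. -/
def lightCone (x t : ℝ) : Set (ℝ × ℝ) :=
  {q : ℝ × ℝ | 0 ≤ q.2 ∧ q.2 ≤ t ∧ |q.1 - x| ≤ t - q.2}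

open Filter NNReal

section PowerSeries

variable {a : ℕ → ℝ}

lemma summable_mul_pow_of_abs_le_one (ha : Summable fun k => |a k|) {z : ℝ} (hz : |z| ≤ 1) :
    Summable fun k => a k * z ^ k :=
  Summable.of_norm_bounded ha fun k => by
    rw [Real.norm_eq_abs, abs_mul, abs_pow]
    exact mul_le_of_le_one_right (abs_nonneg _) (pow_le_one₀ (abs_nonneg _) hz)

lemma abs_pow_sub_pow_le_of_abs_le_one {z z' : ℝ} (hz : |z| ≤ 1) (hz' : |z'| ≤ 1) (k : ℕ) :
    |z ^ k - z' ^ k| ≤ k * |z - z'| :=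
  calc |z ^ k - z' ^ k| ≤ |z - z'| * k * max |z| |z'| ^ (k - 1) := abs_pow_sub_pow_le ..
    _ ≤ |z - z'| * k * 1 := by gcongr; exact pow_le_one₀ (by positivity) (max_le hz hz')
    _ = k * |z - z'| := by ring

lemma lipschitzOnWith_tsum_mul_pow (ha : Summable fun k => |a k|)
    (hka : Summable fun k : ℕ => (k : ℝ) * |a k|) :
    LipschitzOnWith (Real.toNNReal (∑' k : ℕ, (k : ℝ) * |a k|))
      (fun z => ∑' k, a k * z ^ k) (Icc (-1) 1) := by
  refine LipschitzOnWith.of_dist_le' fun z hz z' hz' => ?_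
  rw [mem_Icc, ← abs_le] at hz hz'
  rw [Real.dist_eq, Real.dist_eq, ← (summable_mul_pow_of_abs_le_one ha hz).tsum_sub
    (summable_mul_pow_of_abs_le_one ha hz'), ← Real.norm_eq_abs]
  refine tsum_of_norm_bounded (hka.hasSum.mul_right |z - z'|) fun k => ?_
  rw [Real.norm_eq_abs, ← mul_sub, abs_mul, mul_comm _ |a k|, mul_assoc]
  exact mul_le_mul_of_nonneg_left (abs_pow_sub_pow_le_of_abs_le_one hz hz' k) (abs_nonneg _)

end PowerSeries

lemma abs_eq_abs_mul_abs_of_eq_ite_div {a p b : ℝ} (hb : b = if p ≠ 0 then a / p else 0)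
    (hp : p = 0 → a = 0) : |a| = |b| * |p| := by
  by_cases h : p = 0
  · simp [hp h, h]
  · rw [hb, if_pos h, abs_div, div_mul_cancel₀ _ (abs_ne_zero.mpr h)]

lemma summable_natCast_mul_abs_of_bddAbove {a b p : ℕ → ℝ} (hab : ∀ k, |a k| = |b k| * |p k|)
    (hbdd : BddAbove (range fun k => |b (k + 1)|)) (hmean : Summable fun k : ℕ => (k : ℝ) * p k) :
    Summable fun k : ℕ => (k : ℝ) * |a k| := by
  obtain ⟨B, hB⟩ := hbdd
  refine Summable.of_nonneg_of_le (fun k => by positivity) (fun k => ?_) (hmean.abs.mul_left B)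
  rcases k with _ | k
  · simp
  · rw [hab, abs_mul, Nat.abs_cast, mul_left_comm]
    gcongr
    exact hB ⟨k, rfl⟩

section LightCone

lemma isClosed_lightCone (x t : ℝ) : IsClosed (lightCone x t) :=
  (isClosed_le continuous_const continuous_snd).inter <|
    (isClosed_le continuous_snd continuous_const).inter <|
      isClosed_le (f := fun q : ℝ × ℝ => |q.1 - x|) (by fun_prop) (by fun_prop)

lemma lightCone_subset_Icc_prod (x t : ℝ) : lightCone x t ⊆ Icc (x - t) (x + t) ×ˢ Icc 0 t := by
  rintro ⟨y, s⟩ ⟨hs0, hst, hy⟩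
  rw [abs_le] at hy
  exact ⟨⟨by linarith, by linarith⟩, hs0, hst⟩

lemma isCompact_lightCone (x t : ℝ) : IsCompact (lightCone x t) :=
  (isCompact_Icc.prod isCompact_Icc).of_isClosed_subset (isClosed_lightCone x t)
    (lightCone_subset_Icc_prod x t)

lemma setIntegral_lightCone_pow_le (x : ℝ) {t : ℝ} (ht : 0 ≤ t) (m : ℕ) :
    ∫ q in lightCone x t, q.2 ^ m ≤ 2 * t ^ (m + 2) / (m + 1) := by
  have hrect : IntegrableOn (fun q : ℝ × ℝ => q.2 ^ m) (Icc (x - t) (x + t) ×ˢ Icc 0 t) :=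
    (continuous_snd.pow m).continuousOn.integrableOn_compact (isCompact_Icc.prod isCompact_Icc)
  calc ∫ q in lightCone x t, q.2 ^ m
      ≤ ∫ q in Icc (x - t) (x + t) ×ˢ Icc 0 t, q.2 ^ m :=
        setIntegral_mono_set hrect
          (ae_restrict_of_forall_mem (measurableSet_Icc.prod measurableSet_Icc)
            fun q hq => pow_nonneg hq.2.1 m)
          (lightCone_subset_Icc_prod x t).eventuallyLE
    _ = (∫ _ in Icc (x - t) (x + t), (1 : ℝ)) * ∫ s in Icc 0 t, s ^ m := by
        rw [Measure.volume_eq_prod, ← setIntegral_prod_mul]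
        simp only [one_mul]
    _ = 2 * t ^ (m + 2) / (m + 1) := by
        rw [setIntegral_const, Real.volume_real_Icc_of_le (by linarith),
          integral_Icc_eq_integral_Ioc, ← intervalIntegral.integral_of_le ht, integral_pow,
          zero_pow (Nat.succ_ne_zero m)]
        simp only [smul_eq_mul, mul_one]
        ring

end LightCone

def IsMildSolution (F : ℝ → ℝ) (v : ℝ → ℝ → ℝ) (T : ℝ) (u : ℝ → ℝ → ℝ) : Prop :=
  ∀ x t : ℝ, 0 ≤ t → t < T → u x t = v x t + (1 / 2) * (∫ q in lightCone x t, F (u q.1 q.2))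

section MildSolution

variable {F : ℝ → ℝ} {K : ℝ≥0} {v : ℝ → ℝ → ℝ} {T : ℝ} {u u' : ℝ → ℝ → ℝ}

lemma LipschitzOnWith.integrableOn_lightCone_comp (hF : LipschitzOnWith K F (Icc (-1) 1))
    {U : ℝ × ℝ → ℝ} (hU : Measurable U) {x t : ℝ} (hU1 : ∀ q ∈ lightCone x t, |U q| ≤ 1) :
    IntegrableOn (fun q => F (U q)) (lightCone x t) := by
  -- `F` is arbitrary off `[-1, 1]`; its McShane extension `G` is continuous, so `G ∘ U` is
  -- measurable.
  obtain ⟨G, hG, hFG⟩ := hF.extend_real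
  obtain ⟨C, hC⟩ := isCompact_Icc.exists_bound_of_continuousOn hG.continuous.continuousOn
  have hcone := (isClosed_lightCone x t).measurableSet
  have hGU : IntegrableOn (fun q => G (U q)) (lightCone x t) :=
    Measure.integrableOn_of_bounded (isCompact_lightCone x t).measure_lt_top.ne
      (hG.continuous.measurable.comp hU).aestronglyMeasurable
      (ae_restrict_of_forall_mem hcone fun q hq => hC _ (abs_le.mp (hU1 q hq)))
  exact hGU.congr_fun (fun q hq => (hFG (abs_le.mp (hU1 q hq))).symm) hcone

variable (hF : LipschitzOnWith K F (Icc (-1) 1))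
  (hu : IsMildSolution F v T u) (hu' : IsMildSolution F v T u')
  (hmeas : Measurable fun q : ℝ × ℝ => u q.1 q.2) (hmeas' : Measurable fun q : ℝ × ℝ => u' q.1 q.2)
  (hub : ∀ x t, 0 ≤ t → t < T → |u x t| ≤ 1) (hub' : ∀ x t, 0 ≤ t → t < T → |u' x t| ≤ 1)
include hF hu hu' hmeas hmeas' hub hub'

lemma IsMildSolution.abs_sub_le_of_le_mul_pow {c : ℝ} (hc : 0 ≤ c) {m : ℕ} {x t : ℝ}
    (ht : 0 ≤ t) (htT : t < T)
    (hle : ∀ q ∈ lightCone x t, |u q.1 q.2 - u' q.1 q.2| ≤ c * q.2 ^ m) :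
    |u x t - u' x t| ≤ K * c * t ^ (m + 2) / (m + 1) := by
  have hcone := (isClosed_lightCone x t).measurableSet
  have hstrip : ∀ q ∈ lightCone x t, 0 ≤ q.2 ∧ q.2 < T := fun q hq => ⟨hq.1, hq.2.1.trans_lt htT⟩
  have hb : ∀ q ∈ lightCone x t, |u q.1 q.2| ≤ 1 :=
    fun q hq => hub _ _ (hstrip q hq).1 (hstrip q hq).2
  have hb' : ∀ q ∈ lightCone x t, |u' q.1 q.2| ≤ 1 :=
    fun q hq => hub' _ _ (hstrip q hq).1 (hstrip q hq).2
  have hdiff : u x t - u' x t =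
      (1 / 2) * ∫ q in lightCone x t, (F (u q.1 q.2) - F (u' q.1 q.2)) := by
    rw [hu x t ht htT, hu' x t ht htT, integral_sub (hF.integrableOn_lightCone_comp hmeas hb)
      (hF.integrableOn_lightCone_comp hmeas' hb')]
    ring
  have hpt : ∀ q ∈ lightCone x t, ‖F (u q.1 q.2) - F (u' q.1 q.2)‖ ≤ K * c * q.2 ^ m := by
    intro q hq
    rw [← dist_eq_norm, mul_assoc]
    refine (hF.dist_le_mul _ (abs_le.mp (hb q hq)) _ (abs_le.mp (hb' q hq))).trans ?_
    rw [Real.dist_eq]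
    exact mul_le_mul_of_nonneg_left (hle q hq) K.coe_nonneg
  have hint : IntegrableOn (fun q : ℝ × ℝ => (K : ℝ) * c * q.2 ^ m) (lightCone x t) :=
    (continuous_const.mul (continuous_snd.pow m)).continuousOn.integrableOn_compact
      (isCompact_lightCone x t)
  calc |u x t - u' x t|
      ≤ (1 / 2) * ∫ q in lightCone x t, (K : ℝ) * c * q.2 ^ m := by
        rw [hdiff, abs_mul, abs_of_pos (by norm_num : (0 : ℝ) < 1 / 2), ← Real.norm_eq_abs]
        gcongr
        exact norm_integral_le_of_norm_le hint (ae_restrict_of_forall_mem hcone hpt)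
    _ ≤ (1 / 2) * (K * c * (2 * t ^ (m + 2) / (m + 1))) := by
        rw [integral_const_mul]
        gcongr
        exact setIntegral_lightCone_pow_le x ht m
    _ = K * c * t ^ (m + 2) / (m + 1) := by ring

lemma IsMildSolution.abs_sub_le_pow_div_factorial (n : ℕ) :
    ∀ x t, 0 ≤ t → t < T → |u x t - u' x t| ≤ 2 * (K * t ^ 2) ^ n / n.factorial := by
  induction n with
  | zero =>
    intro x t ht htT
    simp only [pow_zero, Nat.factorial_zero, Nat.cast_one, mul_one, div_one]
    linarith [abs_sub (u x t) (u' x t), hub x t ht htT, hub' x t ht htT]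
  | succ n ih =>
    intro x t ht htT
    have hle : ∀ q ∈ lightCone x t,
        |u q.1 q.2 - u' q.1 q.2| ≤ 2 * K ^ n / n.factorial * q.2 ^ (2 * n) := fun q hq => by
      convert ih q.1 q.2 hq.1 (hq.2.1.trans_lt htT) using 1
      ring
    refine (hu.abs_sub_le_of_le_mul_pow hF hu' hmeas hmeas' hub hub' (by positivity) ht htT
      hle).trans ?_
    have hn : (n : ℝ) + 1 ≤ 2 * n + 1 := by linarith [n.cast_nonneg (α := ℝ)]
    calc (K : ℝ) * (2 * K ^ n / n.factorial) * t ^ (2 * n + 2) / ((2 * n : ℕ) + 1)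
        = 2 * (K * t ^ 2) ^ (n + 1) / ((2 * n + 1) * n.factorial) := by
          push_cast
          field_simp
          ring
      _ ≤ 2 * (K * t ^ 2) ^ (n + 1) / ((n + 1) * n.factorial) := by gcongr
      _ = 2 * (K * t ^ 2) ^ (n + 1) / (n + 1).factorial := by
          rw [Nat.factorial_succ]
          push_cast
          ring

theorem IsMildSolution.eq_of_lipschitzOnWith :
    ∀ x t, 0 ≤ t → t < T → u x t = u' x t := by
  intro x t ht htT
  have hlim : Tendsto (fun n : ℕ => 2 * ((K * t ^ 2) ^ n / n.factorial)) atTop (nhds 0) := by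
    simpa using (FloorSemiring.tendsto_pow_div_factorial_atTop ((K : ℝ) * t ^ 2)).const_mul 2
  have hle : |u x t - u' x t| ≤ 0 := ge_of_tendsto' hlim fun n => by
    rw [← mul_div_assoc]
    exact hu.abs_sub_le_pow_div_factorial hF hu' hmeas hmeas' hub hub' n x t ht htT
  exact sub_eq_zero.mp (abs_nonpos_iff.mp hle)

end MildSolution

theorem mild_solution_unique_general
    (a : ℕ → ℝ) (ha : Summable fun k => |a k|)
    (F : ℝ → ℝ) (hFdef : ∀ z : ℝ, |z| ≤ 1 → F z = ∑' k : ℕ, a k * z ^ k)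
    (p : ℕ → ℝ) (hppos : ∀ k, a k ≠ 0 → 0 < p k)
    (hmean : Summable fun k : ℕ => (k : ℝ) * p k)
    (b : ℕ → ℝ) (hb : ∀ k, b k = if p k ≠ 0 then a k / p k else 0)
    (hbdd : BddAbove (Set.range fun k : ℕ => |b (k + 1)|))
    (v : ℝ → ℝ → ℝ)
    (T : ℝ)
    (u u' : ℝ → ℝ → ℝ)
    (hmeas : Measurable (fun q : ℝ × ℝ => u q.1 q.2))
    (hmeas' : Measurable (fun q : ℝ × ℝ => u' q.1 q.2))
    (hub : ∀ x t : ℝ, 0 ≤ t → t < T → |u x t| ≤ 1)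
    (hub' : ∀ x t : ℝ, 0 ≤ t → t < T → |u' x t| ≤ 1)
    (hmild : ∀ x t : ℝ, 0 ≤ t → t < T →
      u x t = v x t + (1 / 2) * (∫ q in lightCone x t, F (u q.1 q.2)))
    (hmild' : ∀ x t : ℝ, 0 ≤ t → t < T →
      u' x t = v x t + (1 / 2) * (∫ q in lightCone x t, F (u' q.1 q.2))) :
    ∀ x t : ℝ, 0 ≤ t → t < T → u x t = u' x t := by
  have hab : ∀ k, |a k| = |b k| * |p k| := fun k =>
    abs_eq_abs_mul_abs_of_eq_ite_div (hb k) fun hp => not_not.mp fun ha0 => (hppos k ha0).ne' hp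
  have hF : LipschitzOnWith _ F (Icc (-1) 1) := fun z hz z' hz' => by
    rw [hFdef z (abs_le.mpr hz), hFdef z' (abs_le.mpr hz')]
    exact lipschitzOnWith_tsum_mul_pow ha (summable_natCast_mul_abs_of_bddAbove hab hbdd hmean)
      hz hz'
  exact IsMildSolution.eq_of_lipschitzOnWith hF hmild hmild' hmeas hmeas' hub hub'

/-- uniqueness part of Theorem 2: if `T ≤ √(2/b*)` and
`sup_x |w(x,t)| + (t²/2)|b₀| ≤ 1` for all `t ∈ [0,T)`, then any two mild solutions
of `□u = F(u)` on `[0,T)` bounded by `1` coincide. -/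
theorem mild_solution_unique
    (a : ℕ → ℝ) (ha : Summable fun k => |a k|)
    (F : ℝ → ℝ) (hFdef : ∀ z : ℝ, |z| ≤ 1 → F z = ∑' k : ℕ, a k * z ^ k)
    (p : ℕ → ℝ) (hpnn : ∀ k, 0 ≤ p k) (hpsum : HasSum p 1)
    (hp0 : 0 < p 0) (hppos : ∀ k, a k ≠ 0 → 0 < p k)
    (hmean : Summable fun k : ℕ => (k : ℝ) * p k)
    (hmean1 : (∑' k : ℕ, (k : ℝ) * p k) ≤ 1)
    (b : ℕ → ℝ) (hb : ∀ k, b k = if p k ≠ 0 then a k / p k else 0)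
    (hbdd : BddAbove (Set.range fun k : ℕ => |b (k + 1)|))
    (φ ψ : ℝ → ℝ) (v w : ℝ → ℝ → ℝ)
    (hv : ∀ x t : ℝ, v x t =
      (1 / 2) * (∫ y in (x - t)..(x + t), ψ y) + (1 / 2) * (φ (x + t) + φ (x - t)))
    (hw : ∀ x t : ℝ, w x t = v x t / p 0)
    (T : ℝ) (hT : 0 < T)
    (hTB : T ≤ Real.sqrt (2 / (⨆ k : ℕ, |b (k + 1)|)))
    (hsmall : ∀ t : ℝ, 0 ≤ t → t < T → ∀ x : ℝ, |w x t| + t ^ 2 / 2 * |b 0| ≤ 1)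
    (u u' : ℝ → ℝ → ℝ)
    (hmeas : Measurable (fun q : ℝ × ℝ => u q.1 q.2))
    (hmeas' : Measurable (fun q : ℝ × ℝ => u' q.1 q.2))
    (hub : ∀ x t : ℝ, 0 ≤ t → t < T → |u x t| ≤ 1)
    (hub' : ∀ x t : ℝ, 0 ≤ t → t < T → |u' x t| ≤ 1)
    (hmild : ∀ x t : ℝ, 0 ≤ t → t < T →
      u x t = v x t + (1 / 2) * (∫ q in lightCone x t, F (u q.1 q.2)))
    (hmild' : ∀ x t : ℝ, 0 ≤ t → t < T →
      u' x t = v x t + (1 / 2) * (∫ q in lightCone x t, F (u' q.1 q.2))) :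
    ∀ x t : ℝ, 0 ≤ t → t < T → u x t = u' x t :=
  mild_solution_unique_general a ha F hFdef p hppos hmean b hb hbdd v T u u' hmeas hmeas' hub hub'
    hmild hmild'
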